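/- arXiv:2003.07511 — 3 statements merged into one kernel-verified Lean document; each statement's English description precedes it below -/
import Mathlib

section
/- Let S be a Seidel matrix of order n with smallest eigenvalue exactly −5. If the switching class of S contains a simple graph G whose adjacency matrix has spectral radius ρ(G) ≤ 2, then rk(S + 5I) ≥ 2n/3 + 1. -/
open Matrix

/-- A Seidel matrix: symmetric, zero diagonal, off-diagonal entries `±1`. -/
def IsSeidel {n : ℕ} (S : Matrix (Fin n) (Fin n) ℝ) : Prop :=
  S.IsSymm ∧ (∀ i, S i i = 0) ∧ ∀ i j, i ≠ j → S i j = 1 ∨ S i j = -1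

/-- Smallest eigenvalue of a real symmetric matrix (junk value `0` if not Hermitian). -/
noncomputable def minEig {m : Type*} [Fintype m] [DecidableEq m] (A : Matrix m m ℝ) : ℝ := by
  classical
  exact if hA : A.IsHermitian then ⨅ i, hA.eigenvalues i else 0

/-- Largest eigenvalue of a real symmetric matrix (junk value `0` if not Hermitian). -/
noncomputable def maxEig {m : Type*} [Fintype m] [DecidableEq m] (A : Matrix m m ℝ) : ℝ := by
  classical
  exact if hA : A.IsHermitian then ⨆ i, hA.eigenvalues i else 0

/-- The Seidel matrix of a simple graph `G`, i.e. `J - I - 2A(G)`: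
zero diagonal, `-1` on adjacent pairs, `1` on distinct non-adjacent pairs. -/
noncomputable def seidelOf {V : Type*} [Fintype V] (G : SimpleGraph V) : Matrix V V ℝ := by
  classical
  exact Matrix.of fun i j => if i = j then 0 else if G.Adj i j then -1 else 1

/-- Smallest eigenvalue of the Seidel matrix of a finite graph. -/
noncomputable def minSeidelEig {V : Type*} [Finite V] (G : SimpleGraph V) : ℝ := by
  classical
  letI := Fintype.ofFinite V
  exact minEig (seidelOf G)

/-- Spectral radius (largest adjacency eigenvalue) of a finite graph. -/
noncomputable def specRad {V : Type*} [Finite V] (G : SimpleGraph V) : ℝ := by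
  classical
  letI := Fintype.ofFinite V
  exact maxEig (G.adjMatrix ℝ)

/-- Switching equivalence: `T = D S D` for some diagonal `±1` matrix `D`. -/
def SwEquiv {n : ℕ} (S T : Matrix (Fin n) (Fin n) ℝ) : Prop :=
  ∃ ε : Fin n → ℝ, (∀ i, ε i = 1 ∨ ε i = -1) ∧
    T = Matrix.diagonal ε * S * Matrix.diagonal ε

/-- The switching graph of a Seidel matrix `S`: the graph on `2n` vertices whose Seidel
matrix is the block matrix `((S, I - S), (I - S, S))`, adjacency given by entries `-1`. -/
def switchGraph {n : ℕ} (S : Matrix (Fin n) (Fin n) ℝ) : SimpleGraph (Fin n ⊕ Fin n) :=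
  SimpleGraph.fromRel fun x y => Matrix.fromBlocks S (1 - S) (1 - S) S x y = -1

/-- Independence number of a graph. -/
noncomputable def indepNum {V : Type*} (G : SimpleGraph V) : ℕ := Gᶜ.cliqueNum

/-- The graph consisting of `t` disjoint copies of `K₂`. -/
def nK2 (t : ℕ) : SimpleGraph (Fin t × Fin 2) :=
  SimpleGraph.fromRel fun p q => p.1 = q.1

/-!
Switching preserves the rank and the singularity of `S + 5I`, so `S` may be replaced by `S(G)`.
With `A = A(G)` and `J` the all-ones matrix, `S(G) + 5I = J + 2(2I - A)` is a sum of two positive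
semidefinite matrices (as `ρ(G) ≤ 2`), so its kernel is `ker(2I - A) ∩ 𝟙^⊥`. Since `-5` is an
eigenvalue, this kernel contains some `x ≠ 0`; as `A ≥ 0`, `|x|` is again in `ker(2I - A)` but not
orthogonal to `𝟙`. Hence the nullity of `S(G) + 5I` is less than the multiplicity `m` of the
eigenvalue `2` of `A`. Finally `9m ≤ tr((A + I)²) = 𝟙ᵀA𝟙 + n ≤ 3n`.
-/

open Module

namespace Matrix

lemma rank_add_finrank_ker_mulVecLin {m n K : Type*} [Fintype n] [Field K] (M : Matrix m n K) :
    M.rank + finrank K (LinearMap.ker M.mulVecLin) = Fintype.card n := by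
  rw [rank, LinearMap.finrank_range_add_finrank_ker, finrank_fintype_fun_eq_card]

variable {m : Type*} [Fintype m]

open scoped ComplexOrder in
lemma PosSemidef.mulVec_eq_zero_of_add_mulVec_eq_zero {𝕜 : Type*} [RCLike 𝕜]
    {A B : Matrix m m 𝕜} (hA : A.PosSemidef) (hB : B.PosSemidef) {x : m → 𝕜}
    (h : (A + B) *ᵥ x = 0) : A *ᵥ x = 0 := by
  have hsum : star x ⬝ᵥ A *ᵥ x + star x ⬝ᵥ B *ᵥ x = 0 := by
    rw [← dotProduct_add, ← add_mulVec, h, dotProduct_zero]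
  rw [← hA.dotProduct_mulVec_zero_iff]
  exact (add_eq_zero_iff_of_nonneg (hA.dotProduct_mulVec_nonneg x)
    (hB.dotProduct_mulVec_nonneg x)).mp hsum |>.1

lemma dotProduct_mulVec_le_abs {A : Matrix m m ℝ} (hA : ∀ i j, 0 ≤ A i j) (x : m → ℝ) :
    x ⬝ᵥ A *ᵥ x ≤ |x| ⬝ᵥ A *ᵥ |x| := by
  simp only [dotProduct, mulVec, Finset.mul_sum]
  refine Finset.sum_le_sum fun i _ => Finset.sum_le_sum fun j _ => ?_
  calc x i * (A i j * x j) ≤ |x i * (A i j * x j)| := le_abs_self _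
    _ = |x| i * (A i j * |x| j) := by simp [abs_mul, abs_of_nonneg (hA i j)]

variable [DecidableEq m]

lemma mulVec_abs_eq_zero_of_nonneg {A : Matrix m m ℝ} (hA : ∀ i j, 0 ≤ A i j) {c : ℝ}
    (hN : (c • 1 - A).PosSemidef) {x : m → ℝ} (hx : (c • 1 - A) *ᵥ x = 0) :
    (c • 1 - A) *ᵥ |x| = 0 := by
  have hq (v : m → ℝ) : v ⬝ᵥ (c • 1 - A) *ᵥ v = c * (v ⬝ᵥ v) - v ⬝ᵥ A *ᵥ v := by
    simp [sub_mulVec, dotProduct_sub, smul_mulVec]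
  have hqx : x ⬝ᵥ (c • 1 - A) *ᵥ x = 0 := by rw [hx, dotProduct_zero]
  have hself : |x| ⬝ᵥ |x| = x ⬝ᵥ x := by simp [dotProduct, abs_mul_abs_self]
  rw [← hN.dotProduct_mulVec_zero_iff, star_trivial]
  refine le_antisymm ?_ (by simpa using hN.dotProduct_mulVec_nonneg |x|)
  rw [hq, hself]
  linarith [hq x, dotProduct_mulVec_le_abs hA x]

lemma sum_sum_le_of_posSemidef_smul_one_sub {A : Matrix m m ℝ} {c : ℝ}
    (h : (c • 1 - A).PosSemidef) : ∑ i, ∑ j, A i j ≤ c * Fintype.card m := by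
  have h1 := h.dotProduct_mulVec_nonneg 1
  simp only [star_one, sub_mulVec, smul_mulVec, one_mulVec, dotProduct_sub, dotProduct_smul,
    dotProduct_one, smul_eq_mul, Pi.one_apply, Finset.sum_const, Finset.card_univ, nsmul_eq_mul,
    mul_one, mulVec, one_dotProduct] at h1
  simpa [dotProduct] using h1

/-- Bessel's inequality for the rows of `B` against an orthonormal basis of the kernel. -/
lemma sq_mul_finrank_ker_le_sum_sq (B : Matrix m m ℝ) (μ : ℝ) :
    μ ^ 2 * finrank ℝ (LinearMap.ker (μ • 1 - B).mulVecLin) ≤ ∑ i, ∑ j, B i j ^ 2 := by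
  set W := LinearMap.ker (μ • 1 - B).mulVecLin
  set W' : Submodule ℝ (EuclideanSpace ℝ m) :=
    W.map (WithLp.linearEquiv 2 ℝ (m → ℝ)).symm.toLinearMap
  have hdim : finrank ℝ W' = finrank ℝ W := LinearEquiv.finrank_map_eq _ _
  let b := stdOrthonormalBasis ℝ W'
  let v : Fin (finrank ℝ W') → EuclideanSpace ℝ m := fun k => b k
  have hv : Orthonormal ℝ v := b.orthonormal.comp_linearIsometry W'.subtypeₗᵢ
  have heigen (k) : B *ᵥ (v k).ofLp = μ • (v k).ofLp := by
    obtain ⟨w, hw, hwv⟩ := Submodule.mem_map.mp (b k).2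
    have hw' : (μ • 1 - B) *ᵥ w = 0 := hw
    rw [sub_mulVec, smul_mulVec, one_mulVec, sub_eq_zero] at hw'
    simp only [v, ← hwv]
    exact hw'.symm
  have hrow (i) : ∑ k, (μ * v k i) ^ 2 ≤ ∑ j, B i j ^ 2 := by
    have hinner (k) : inner ℝ (v k) (WithLp.toLp 2 (B i)) = μ * v k i := by
      have := congrFun (heigen k) i
      simp only [mulVec, dotProduct, Pi.smul_apply, smul_eq_mul] at this
      simp [PiLp.inner_apply, ← this]
    simpa [hinner, EuclideanSpace.real_norm_sq_eq, ← abs_mul, sq_abs] using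
      hv.sum_inner_products_le (WithLp.toLp 2 (B i)) (s := Finset.univ)
  have hnorm (k) : ∑ i, v k i ^ 2 = 1 := by
    simpa [hv.1 k] using (EuclideanSpace.real_norm_sq_eq (v k)).symm
  calc μ ^ 2 * finrank ℝ W = ∑ i, ∑ k, (μ * v k i) ^ 2 := by
        simp_rw [mul_pow, ← Finset.mul_sum]
        rw [Finset.sum_comm]
        simp [hnorm, hdim]
    _ ≤ ∑ i, ∑ j, B i j ^ 2 := Finset.sum_le_sum fun i _ => hrow i

lemma minEig_of_isEmpty [IsEmpty m] (A : Matrix m m ℝ) : minEig A = 0 := by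
  unfold minEig
  split_ifs <;> simp

lemma IsHermitian.minEig_mem_spectrum [Nonempty m] {A : Matrix m m ℝ} (hA : A.IsHermitian) :
    minEig A ∈ spectrum ℝ A := by
  obtain ⟨i, hi⟩ := Finite.exists_min hA.eigenvalues
  have : minEig A = hA.eigenvalues i := by
    rw [minEig, dif_pos hA]
    exact le_antisymm (ciInf_le (Set.finite_range _).bddBelow i) (le_ciInf hi)
  exact this ▸ hA.eigenvalues_mem_spectrum_real i

lemma IsHermitian.det_sub_minEig_smul_one [Nonempty m] {A : Matrix m m ℝ} (hA : A.IsHermitian) :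
    (A - minEig A • 1).det = 0 := by
  have h := spectrum.mem_iff.mp hA.minEig_mem_spectrum
  rwa [Algebra.algebraMap_eq_smul_one, ← neg_sub, IsUnit.neg_iff, isUnit_iff_isUnit_det,
    isUnit_iff_ne_zero, not_not] at h

open scoped MatrixOrder in
lemma IsHermitian.posSemidef_smul_one_sub {A : Matrix m m ℝ} (hA : A.IsHermitian) {c : ℝ}
    (h : maxEig A ≤ c) : (c • 1 - A).PosSemidef := by
  rw [← nonneg_iff_posSemidef, sub_nonneg, ← Algebra.algebraMap_eq_smul_one]
  refine le_algebraMap_of_spectrum_le fun x hx => ?_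
  obtain ⟨i, rfl⟩ := hA.spectrum_real_eq_range_eigenvalues ▸ hx
  rw [maxEig, dif_pos hA] at h
  exact (le_ciSup (Set.finite_range _).bddAbove i).trans h

end Matrix

namespace SwEquiv

variable {n : ℕ} {S T : Matrix (Fin n) (Fin n) ℝ}

lemma diagonal_mul_self {ε : Fin n → ℝ} (hε : ∀ i, ε i = 1 ∨ ε i = -1) :
    diagonal ε * diagonal ε = 1 := by
  rw [diagonal_mul_diagonal, ← diagonal_one]
  congr 1
  ext i
  rcases hε i with h | h <;> simp [h]

lemma add_smul_one (h : SwEquiv S T) (c : ℝ) : SwEquiv (S + c • 1) (T + c • 1) := by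
  obtain ⟨ε, hε, rfl⟩ := h
  refine ⟨ε, hε, ?_⟩
  rw [Matrix.mul_add, Matrix.add_mul, Matrix.mul_smul, Matrix.mul_one, Matrix.smul_mul,
    diagonal_mul_self hε]

lemma det_eq (h : SwEquiv S T) : T.det = S.det := by
  obtain ⟨ε, hε, rfl⟩ := h
  rw [det_mul, det_mul, mul_right_comm, ← det_mul, diagonal_mul_self hε, det_one, one_mul]

lemma rank_eq (h : SwEquiv S T) : T.rank = S.rank := by
  obtain ⟨ε, hε, rfl⟩ := h
  have hD : IsUnit (diagonal ε).det := .of_mul_eq_one _ <| by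
    rw [← det_mul, diagonal_mul_self hε, det_one]
  rw [rank_mul_eq_left_of_isUnit_det _ _ hD, rank_mul_eq_right_of_isUnit_det _ _ hD]

end SwEquiv

namespace SimpleGraph

variable {V : Type*} (G : SimpleGraph V) [DecidableRel G.Adj]

lemma adjMatrix_nonneg (i j : V) : 0 ≤ G.adjMatrix ℝ i j := by
  by_cases h : G.Adj i j <;> simp [h]

variable [Fintype V] [DecidableEq V]

lemma seidelOf_eq : seidelOf G = vecMulVec 1 1 - 1 - (2 : ℝ) • G.adjMatrix ℝ := by
  ext i j
  by_cases hij : i = j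
  · subst hij; simp [seidelOf]
  · by_cases hadj : G.Adj i j <;> norm_num [seidelOf, hij, hadj, one_apply]

lemma specRad_eq_maxEig : specRad G = maxEig (G.adjMatrix ℝ) := by
  unfold specRad
  congr!

lemma three_mul_finrank_ker_le (h : ((2 : ℝ) • 1 - G.adjMatrix ℝ).PosSemidef) :
    3 * finrank ℝ (LinearMap.ker ((2 : ℝ) • 1 - G.adjMatrix ℝ).mulVecLin) ≤ Fintype.card V := by
  set A := G.adjMatrix ℝ
  set d := finrank ℝ (LinearMap.ker ((2 : ℝ) • 1 - A).mulVecLin)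
  have hB := sq_mul_finrank_ker_le_sum_sq (A + 1) 3
  rw [show (3 : ℝ) • 1 - (A + 1) = (2 : ℝ) • 1 - A by module] at hB
  have hentry (i j) : (A + 1) i j ^ 2 = A i j + (1 : Matrix V V ℝ) i j := by
    by_cases hij : i = j
    · subst hij; simp [A]
    · by_cases hadj : G.Adj i j <;> simp [A, hij, hadj]
  have hsq : ∑ i, ∑ j, (A + 1) i j ^ 2 = ∑ i, ∑ j, A i j + Fintype.card V := by
    simp only [hentry, Finset.sum_add_distrib, add_right_inj]
    simp [one_apply]
  have hsum := sum_sum_le_of_posSemidef_smul_one_sub h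
  have : (3 : ℝ) * d ≤ Fintype.card V := by linarith
  exact_mod_cast this

lemma finrank_ker_seidelOf_add_five_lt (h : ((2 : ℝ) • 1 - G.adjMatrix ℝ).PosSemidef)
    (hdet : (seidelOf G + (5 : ℝ) • 1).det = 0) :
    finrank ℝ (LinearMap.ker (seidelOf G + (5 : ℝ) • 1).mulVecLin) <
      finrank ℝ (LinearMap.ker ((2 : ℝ) • 1 - G.adjMatrix ℝ).mulVecLin) := by
  set N := (2 : ℝ) • 1 - G.adjMatrix ℝ
  set J : Matrix V V ℝ := vecMulVec 1 1
  have hM : seidelOf G + (5 : ℝ) • 1 = J + (2 : ℝ) • N := by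
    rw [seidelOf_eq]; module
  have hJ : J.PosSemidef := by
    simpa only [star_one] using posSemidef_vecMulVec_self_star (1 : V → ℝ)
  have h2N : ((2 : ℝ) • N).PosSemidef := h.smul (by norm_num)
  have hker (v) (hv : (seidelOf G + (5 : ℝ) • 1) *ᵥ v = 0) : N *ᵥ v = 0 ∧ J *ᵥ v = 0 := by
    rw [hM] at hv
    refine ⟨?_, hJ.mulVec_eq_zero_of_add_mulVec_eq_zero h2N hv⟩
    simpa [smul_mulVec] using h2N.mulVec_eq_zero_of_add_mulVec_eq_zero hJ (add_comm J _ ▸ hv)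
  obtain ⟨x, hx0, hx⟩ := exists_mulVec_eq_zero_iff.mpr hdet
  have habs : N *ᵥ |x| = 0 := mulVec_abs_eq_zero_of_nonneg G.adjMatrix_nonneg h (hker x hx).1
  have hnot : (seidelOf G + (5 : ℝ) • 1) *ᵥ |x| ≠ 0 := by
    intro hxM
    obtain ⟨i, hi⟩ := Function.ne_iff.mp hx0
    have hsum : ∑ j, |x j| = 0 := by
      simpa [J, mulVec, dotProduct] using congrFun (hker _ hxM).2 i
    rw [Finset.sum_eq_zero_iff_of_nonneg fun j _ => abs_nonneg (x j)] at hsum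
    exact hi (abs_eq_zero.mp (hsum i (Finset.mem_univ i)))
  exact Submodule.finrank_lt_finrank_of_lt <|
    SetLike.lt_iff_le_and_exists.mpr ⟨fun v hv => (hker v hv).1, |x|, habs, hnot⟩

end SimpleGraph

/-- If `S` is a Seidel matrix of order `n` with smallest eigenvalue exactly `-5`
whose switching class contains a graph `G` with spectral radius `ρ(G) ≤ 2`,
then `rk(S + 5I) ≥ 2n/3 + 1`. -/
theorem stmt_9 {n : ℕ} (S : Matrix (Fin n) (Fin n) ℝ) (hS : IsSeidel S)
    (hmin : minEig S = -5)
    (G : SimpleGraph (Fin n)) (hsw : SwEquiv S (seidelOf G))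
    (hρ : specRad G ≤ 2) :
    2 * (n : ℝ) / 3 + 1 ≤ ((S + (5 : ℝ) • 1).rank : ℝ) := by
  classical
  have : Nonempty (Fin n) := by
    by_contra h
    rw [not_nonempty_iff] at h
    norm_num [minEig_of_isEmpty] at hmin
  have hdetS : (S + (5 : ℝ) • 1).det = 0 := by
    simpa [hmin] using (isHermitian_iff_isSymm.mpr hS.1).det_sub_minEig_smul_one
  have hN := (isHermitian_iff_isSymm.mpr G.isSymm_adjMatrix).posSemidef_smul_one_sub
    (G.specRad_eq_maxEig ▸ hρ)
  have hsw5 := hsw.add_smul_one 5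
  have hlt := G.finrank_ker_seidelOf_add_five_lt hN (hsw5.det_eq.trans hdetS)
  have hle := G.three_mul_finrank_ker_le hN
  have hrank := rank_add_finrank_ker_mulVecLin (seidelOf G + (5 : ℝ) • 1)
  rw [Fintype.card_fin] at hle hrank
  rw [← hsw5.rank_eq, div_add_one three_ne_zero, div_le_iff₀ three_pos]
  exact_mod_cast (by omega : 2 * n + 3 ≤ (seidelOf G + (5 : ℝ) • 1).rank * 3)
end

section
/- Let r ≥ 2, s ≥ 0, t ≥ 0 be integers with s + t ≥ 1, and let K_{1,r}(s,t) be the disjoint union of the star K_{1,r}, s isolated vertices, and t copies of K_2. Then the smallest eigenvalue of the Seidel matrix S(K_{1,r}(s,t)) satisfies λ_min(S(K_{1,r}(s,t))) ≥ −5 if and only if (r − 4)(s + 4t − 4) ≤ 36. -/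
open Matrix

/-- The star `K_{1,r}`: vertex `0` is adjacent to the `r` other vertices. -/
def starG (r : ℕ) : SimpleGraph (Fin (r + 1)) :=
  SimpleGraph.fromRel fun i _ => i = 0

/-!
`λ_min(S) ≥ -5` iff the form `xᵀ(S + 5I)x = (∑ x)² + 4‖x‖² - 4 ∑_{uv ∈ E} x_u x_v` is
nonnegative. On a copy of `K₂` the local part `4a² + 4b² - 4ab` is at least `(a + b)²`, so after
Cauchy–Schwarz on each component the form is bounded below by the three-variable form
`(c + L + M)² + 4c² + 4L²/r + 4M²/m - 4cL`, where `c` is the value at the centre, `L` the sum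
over the leaves, `M` the sum over the other components and `m = s + 4t`. Its determinant is a
positive multiple of `36 - (r - 4)(m - 4)`. Conversely, `starUnionWitness` spreads a column of
the adjugate of that form over the components in the proportions where every Cauchy–Schwarz step
is an equality; on it `xᵀ(S + 5I)x = 4m(r + 5)(36 - (r - 4)(m - 4))`.
-/

section Rayleigh
variable {m : Type*} [Fintype m] [DecidableEq m] {A : Matrix m m ℝ}

theorem le_minEig_iff [Nonempty m] (hA : A.IsHermitian) (c : ℝ) :
    c ≤ minEig A ↔ ∀ x : m → ℝ, c * (x ⬝ᵥ x) ≤ x ⬝ᵥ A *ᵥ x := by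
  have hshift : (A - c • 1).IsHermitian := hA.sub (by simp [Matrix.IsHermitian])
  calc c ≤ minEig A ↔ ∀ μ ∈ spectrum ℝ A, c ≤ μ := by
        rw [minEig, dif_pos hA, le_ciInf_iff (Set.finite_range _).bddBelow,
          hA.spectrum_real_eq_range_eigenvalues, Set.forall_mem_range]
    _ ↔ ∀ μ ∈ spectrum ℝ (A - c • 1), 0 ≤ μ := by
        rw [← Algebra.algebraMap_eq_smul_one, ← spectrum.sub_singleton_eq]
        simp
    _ ↔ (A - c • 1).PosSemidef := by
        rw [hshift.posSemidef_iff_eigenvalues_nonneg, hshift.spectrum_real_eq_range_eigenvalues,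
          Set.forall_mem_range, Pi.le_def]
        rfl
    _ ↔ ∀ x : m → ℝ, c * (x ⬝ᵥ x) ≤ x ⬝ᵥ A *ᵥ x := by
        rw [Matrix.posSemidef_iff_dotProduct_mulVec, and_iff_right hshift]
        simp [Matrix.sub_mulVec, Matrix.smul_mulVec, dotProduct_smul]

end Rayleigh

theorem minSeidelEig_eq {V : Type*} [Fintype V] [DecidableEq V] (G : SimpleGraph V) :
    minSeidelEig G = minEig (seidelOf G) := by
  unfold minSeidelEig
  congr!

theorem seidelOf_isHermitian {V : Type*} [Fintype V] (G : SimpleGraph V) :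
    (seidelOf G).IsHermitian := by
  ext v w
  by_cases hvw : v = w
  · simp [hvw]
  · simp only [seidelOf, Matrix.conjTranspose_apply, Matrix.of_apply, star_trivial, hvw,
      Ne.symm hvw, if_false]
    congr 1
    exact propext (G.adj_comm w v)

theorem dotProduct_seidelOf_mulVec {V : Type*} [Fintype V] (G : SimpleGraph V)
    [DecidableRel G.Adj] (x : V → ℝ) :
    x ⬝ᵥ seidelOf G *ᵥ x = (∑ v, x v) ^ 2 - x ⬝ᵥ x - 2 * (x ⬝ᵥ G.adjMatrix ℝ *ᵥ x) := by
  classical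
  have hS : seidelOf G = Matrix.of (fun _ _ => 1) - 1 - (2 : ℝ) • G.adjMatrix ℝ := by
    ext v w
    by_cases hvw : v = w
    · subst hvw; simp [seidelOf]
    · by_cases hadj : G.Adj v w <;> norm_num [seidelOf, hvw, hadj, Matrix.one_apply_ne hvw]
  have hJ : x ⬝ᵥ Matrix.of (fun _ _ => 1) *ᵥ x = (∑ v, x v) ^ 2 := by
    simp [dotProduct, Matrix.mulVec, sq, Finset.mul_sum, mul_comm]
  rw [hS, Matrix.sub_mulVec, Matrix.sub_mulVec, Matrix.one_mulVec, Matrix.smul_mulVec,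
    dotProduct_sub, dotProduct_sub, dotProduct_smul, smul_eq_mul, hJ]

namespace SimpleGraph
variable {V W : Type*} (G : SimpleGraph V) (H : SimpleGraph W) [DecidableRel G.Adj]
  [DecidableRel H.Adj] [DecidableRel (G ⊕g H).Adj]

theorem adjMatrix_sum :
    (G ⊕g H).adjMatrix ℝ = Matrix.fromBlocks (G.adjMatrix ℝ) 0 0 (H.adjMatrix ℝ) := by
  ext (v | w) (v' | w') <;> simp

theorem dotProduct_adjMatrix_sum_mulVec [Fintype V] [Fintype W] (y : V → ℝ) (z : W → ℝ) :
    Sum.elim y z ⬝ᵥ (G ⊕g H).adjMatrix ℝ *ᵥ Sum.elim y z =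
      y ⬝ᵥ G.adjMatrix ℝ *ᵥ y + z ⬝ᵥ H.adjMatrix ℝ *ᵥ z := by
  simp [adjMatrix_sum, Matrix.fromBlocks_mulVec]

end SimpleGraph

theorem dotProduct_adjMatrix_starG_mulVec (r : ℕ) [DecidableRel (starG r).Adj]
    (x : Fin (r + 1) → ℝ) :
    x ⬝ᵥ (starG r).adjMatrix ℝ *ᵥ x = 2 * (x 0 * ∑ i : Fin r, x i.succ) := by
  rw [SimpleGraph.dotProduct_mulVec_adjMatrix]
  simp [Fin.sum_univ_succ, starG, Fin.succ_ne_zero, (Fin.succ_ne_zero _).symm, ← Finset.mul_sum,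
    ← Finset.sum_mul]
  ring

theorem nK2_adj {t : ℕ} {p q : Fin t × Fin 2} : (nK2 t).Adj p q ↔ p.1 = q.1 ∧ p.2 ≠ q.2 := by
  rw [nK2, SimpleGraph.fromRel_adj, Ne, Prod.ext_iff, eq_comm (a := q.1)]
  tauto

theorem dotProduct_adjMatrix_nK2_mulVec (t : ℕ) [DecidableRel (nK2 t).Adj]
    (x : Fin t × Fin 2 → ℝ) :
    x ⬝ᵥ (nK2 t).adjMatrix ℝ *ᵥ x = 2 * ∑ k, x (k, 0) * x (k, 1) := by
  rw [SimpleGraph.dotProduct_mulVec_adjMatrix]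
  simp [nK2_adj, Fintype.sum_prod_type, Fin.sum_univ_two, Finset.mul_sum]
  exact Finset.sum_congr rfl fun k _ => by ring

theorem four_mul_sq_add_le {s t a b U W : ℝ} (hs : 0 ≤ s) (ht : 0 ≤ t) (ha : 0 ≤ a)
    (hb : 0 ≤ b) (hU : U ^ 2 ≤ s * a) (hW : W ^ 2 ≤ t * b) :
    4 * (U + W) ^ 2 ≤ (s + 4 * t) * (4 * a + b) := by
  have hUW : (8 * U * W) ^ 2 ≤ (s * b + 16 * t * a) ^ 2 := by
    nlinarith [mul_le_mul hU hW (sq_nonneg W) (mul_nonneg hs ha), sq_nonneg (s * b - 16 * t * a)]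
  have hcross : 8 * U * W ≤ s * b + 16 * t * a :=
    (abs_le_of_sq_le_sq' hUW (by positivity)).2
  nlinarith

theorem reducedForm_nonneg {r m c L M Sl T : ℝ} (hr : 0 < r) (hT : 0 ≤ T)
    (hL : L ^ 2 ≤ r * Sl) (hM : 4 * M ^ 2 ≤ m * T) (h : (r - 4) * (m - 4) ≤ 36) :
    0 ≤ (c + L + M) ^ 2 + 4 * c ^ 2 + 4 * Sl + T - 4 * c * L := by
  have hMT : (r - 4) * M ^ 2 ≤ (r + 5) * T := by
    rcases le_or_gt r 4 with h4 | h4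
    · nlinarith [sq_nonneg M]
    · nlinarith [mul_le_mul_of_nonneg_left hM (sub_nonneg.2 h4.le),
        mul_le_mul_of_nonneg_right h hT]
  -- `(4r + 20) r` times the claim equals
  -- `((4r + 20)L + 6rM)² + 20r((r + 5)T - (r - 4)M²) + 20(4r + 20)(r Sl - L²)`
  have hLM : 0 ≤ 4 * L ^ 2 + 12 * L * M + 4 * M ^ 2 + 20 * Sl + 5 * T := by
    refine nonneg_of_mul_nonneg_right ?_ (by positivity : 0 < (4 * r + 20) * r)
    nlinarith [sq_nonneg ((4 * r + 20) * L + 6 * r * M)]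
  -- five times the goal is `(5c + M - L)²` plus the left side of `hLM`
  nlinarith [sq_nonneg (5 * c + M - L)]

abbrev starUnion (r s t : ℕ) : SimpleGraph (Fin (r + 1) ⊕ (Fin s ⊕ Fin t × Fin 2)) :=
  starG r ⊕g ((⊥ : SimpleGraph (Fin s)) ⊕g nK2 t)

section StarUnion
variable {r s t : ℕ}

theorem seidelForm_add_five_starUnion (y : Fin (r + 1) → ℝ) (u : Fin s → ℝ)
    (z : Fin t × Fin 2 → ℝ) :
    Sum.elim y (Sum.elim u z) ⬝ᵥ seidelOf (starUnion r s t) *ᵥ Sum.elim y (Sum.elim u z) +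
        5 * (Sum.elim y (Sum.elim u z) ⬝ᵥ Sum.elim y (Sum.elim u z)) =
      (y 0 + ∑ i : Fin r, y i.succ + (∑ j, u j + ∑ p, z p)) ^ 2 + 4 * y 0 ^ 2 +
          4 * ∑ i : Fin r, y i.succ ^ 2 +
          (4 * (u ⬝ᵥ u) + (4 * (z ⬝ᵥ z) - 4 * ∑ k, z (k, 0) * z (k, 1))) -
        4 * y 0 * ∑ i : Fin r, y i.succ := by
  classical
  rw [dotProduct_seidelOf_mulVec, SimpleGraph.dotProduct_adjMatrix_sum_mulVec,
    SimpleGraph.dotProduct_adjMatrix_sum_mulVec, SimpleGraph.adjMatrix_bot,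
    dotProduct_adjMatrix_starG_mulVec, dotProduct_adjMatrix_nK2_mulVec]
  simp [Fintype.sum_sum_type, Fin.sum_univ_succ, dotProduct, sq]
  ring

theorem seidelForm_add_five_starUnion_nonneg (hr : 0 < r)
    (h : ((r : ℝ) - 4) * ((s : ℝ) + 4 * t - 4) ≤ 36)
    (x : Fin (r + 1) ⊕ (Fin s ⊕ Fin t × Fin 2) → ℝ) :
    0 ≤ x ⬝ᵥ seidelOf (starUnion r s t) *ᵥ x + 5 * (x ⬝ᵥ x) := by
  obtain ⟨y, u, z, rfl⟩ : ∃ y u z, x = Sum.elim y (Sum.elim u z) :=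
    ⟨x ∘ Sum.inl, x ∘ Sum.inr ∘ Sum.inl, x ∘ Sum.inr ∘ Sum.inr, by ext (_ | _ | _) <;> rfl⟩
  rw [seidelForm_add_five_starUnion]
  have hK2 : ∑ k, (z (k, 0) + z (k, 1)) ^ 2 ≤ 4 * (z ⬝ᵥ z) - 4 * ∑ k, z (k, 0) * z (k, 1) := by
    simp only [dotProduct, Fintype.sum_prod_type, Fin.sum_univ_two, Finset.mul_sum,
      ← Finset.sum_sub_distrib]
    exact Finset.sum_le_sum fun k _ => by nlinarith [sq_nonneg (z (k, 0) - z (k, 1))]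
  have hz : (∑ p, z p) ^ 2 ≤ t * (4 * (z ⬝ᵥ z) - 4 * ∑ k, z (k, 0) * z (k, 1)) := by
    rw [Fintype.sum_prod_type]
    simpa using (sq_sum_le_card_mul_sum_sq (s := Finset.univ)
      (f := fun k : Fin t => z (k, 0) + z (k, 1))).trans
        (mul_le_mul_of_nonneg_left hK2 (by positivity))
  have hu : (∑ j, u j) ^ 2 ≤ s * (u ⬝ᵥ u) := by
    simpa [dotProduct, sq] using sq_sum_le_card_mul_sum_sq (s := Finset.univ) (f := u)
  have hy : (∑ i : Fin r, y i.succ) ^ 2 ≤ r * ∑ i : Fin r, y i.succ ^ 2 := by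
    simpa using sq_sum_le_card_mul_sum_sq (s := Finset.univ) (f := fun i : Fin r => y i.succ)
  have hK2_nonneg : 0 ≤ 4 * (z ⬝ᵥ z) - 4 * ∑ k, z (k, 0) * z (k, 1) :=
    (Finset.sum_nonneg fun k _ => sq_nonneg _).trans hK2
  have hu_nonneg : 0 ≤ u ⬝ᵥ u := Finset.sum_nonneg fun j _ => mul_self_nonneg (u j)
  exact reducedForm_nonneg (by exact_mod_cast hr) (by positivity) hy
    (four_mul_sq_add_le (by positivity) (by positivity) hu_nonneg hK2_nonneg hu hz) h

def starUnionWitness (r s t : ℕ) : Fin (r + 1) ⊕ (Fin s ⊕ Fin t × Fin 2) → ℝ :=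
  Sum.elim (Fin.cons (-((s + 4 * t) * (r + 2))) fun _ => -3 * (s + 4 * t))
    (Sum.elim (fun _ => 2 * r + 10) fun _ => 4 * r + 20)

theorem seidelForm_add_five_starUnionWitness :
    starUnionWitness r s t ⬝ᵥ seidelOf (starUnion r s t) *ᵥ starUnionWitness r s t +
        5 * (starUnionWitness r s t ⬝ᵥ starUnionWitness r s t) =
      4 * (s + 4 * t) * (r + 5) * (36 - (r - 4) * (s + 4 * t - 4)) := by
  rw [starUnionWitness, seidelForm_add_five_starUnion]
  simp [dotProduct]
  ring

end StarUnion

/-- For integers `r ≥ 2`, `s, t ≥ 0` with `s + t ≥ 1`, the Seidel matrix of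
`K_{1,r}(s,t)` (the disjoint union of `K_{1,r}`, `s` isolated vertices and `t` copies of
`K₂`) has smallest eigenvalue `≥ -5` iff `(r - 4)(s + 4t - 4) ≤ 36`. -/
theorem stmt_12 (r s t : ℕ) (hr : 2 ≤ r) (hst : 1 ≤ s + t) :
    -5 ≤ minSeidelEig (starG r ⊕g ((⊥ : SimpleGraph (Fin s)) ⊕g nK2 t)) ↔
      ((r : ℤ) - 4) * ((s : ℤ) + 4 * (t : ℤ) - 4) ≤ 36 := by
  classical
  have hcast : ((r : ℤ) - 4) * ((s : ℤ) + 4 * (t : ℤ) - 4) ≤ 36 ↔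
      ((r : ℝ) - 4) * ((s : ℝ) + 4 * t - 4) ≤ 36 := by
    norm_cast
  rw [minSeidelEig_eq, le_minEig_iff (seidelOf_isHermitian _), hcast]
  constructor
  · intro h
    have hm : (0 : ℝ) < s + 4 * t := by
      have : (1 : ℝ) ≤ s + t := by exact_mod_cast hst
      linarith [t.cast_nonneg (α := ℝ)]
    have hwitness : 0 ≤ 4 * (s + 4 * t) * (r + 5) * (36 - (r - 4) * (s + 4 * t - 4) : ℝ) := by
      rw [← seidelForm_add_five_starUnionWitness]
      linarith [h (starUnionWitness r s t)]
    linarith [nonneg_of_mul_nonneg_right hwitness (by positivity)]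
  · intro h x
    linarith [seidelForm_add_five_starUnion_nonneg (by omega) h x]
end

section
/- Let S be a Seidel matrix with smallest eigenvalue exactly −5 whose switching class has clique number ω([S]) = 4. Let G be a graph in the switching class of S containing a 4-clique {x_1, x_2, x_3, x_4}, and for i = 1,…,4 let P_i = { y ∉ {x_1,…,x_4} : y is adjacent to x_i and to no other x_j } be the (4,1)-pillars with respect to this clique. If there exists an edge of G joining a vertex of P_2 to a vertex of P_3, then |P_1| ≤ 19 and |P_4| ≤ 19. -/
open Matrix

/-!
Switching does not change the spectrum, so `S(G) + 5 I` is positive semidefinite. Since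
`ω([S]) = 4`, every pillar is independent: an edge `yz` inside `P₀`, together with `x₁, x₂, x₃`,
becomes a `5`-clique after switching `{y, z}`. Now suppose `|P₀| ≥ 20` and take `20` of its
vertices, split into four classes by their adjacency to `u` and `v`. Together with the clique and
`u, v`, subsets of these classes span a blow-up of a fixed ten-vertex pattern, so the quadratic form
of `S(G) + 5 I` on vectors constant on the parts is an explicit integer quadratic form in the part
sizes and values. For each way of splitting `20` into four classes, one of twelve integer
certificates, with class sizes at most those of the split, makes this form negative. Exchanging
`x₀` and `x₃` gives the bound for `P₃`.
-/

open Finset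

open scoped MatrixOrder in
theorem Matrix.IsHermitian.minEig_mul_dotProduct_le {m : Type*} [Fintype m] [DecidableEq m]
    {A : Matrix m m ℝ} (hA : A.IsHermitian) (w : m → ℝ) :
    minEig A * (w ⬝ᵥ w) ≤ w ⬝ᵥ (A *ᵥ w) := by
  have hle : algebraMap ℝ (Matrix m m ℝ) (minEig A) ≤ A := by
    rw [algebraMap_le_iff_le_spectrum (a := A) hA.isSelfAdjoint,
      hA.spectrum_real_eq_range_eigenvalues]
    rintro _ ⟨i, rfl⟩
    rw [minEig, dif_pos hA]
    exact ciInf_le (Set.finite_range _).bddBelow i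
  simpa [sub_mulVec, Algebra.algebraMap_eq_smul_one, smul_mulVec, dotProduct_sub] using
    (Matrix.le_iff.mp hle).dotProduct_mulVec_nonneg w

section Switching

variable {n : ℕ} {S T : Matrix (Fin n) (Fin n) ℝ}

theorem SwEquiv.exists_apply_eq (h : SwEquiv S T) : ∃ ε : Fin n → ℝ, (∀ i, ε i = 1 ∨ ε i = -1) ∧
    ∀ i j, T i j = ε i * S i j * ε j := by
  obtain ⟨ε, hε, rfl⟩ := h
  exact ⟨ε, hε, fun i j => by simp [diagonal_mul, mul_diagonal]⟩

theorem SwEquiv.le_dotProduct_mulVec (h : SwEquiv S T) {c : ℝ}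
    (hS : ∀ w, c * (w ⬝ᵥ w) ≤ w ⬝ᵥ (S *ᵥ w)) (w : Fin n → ℝ) :
    c * (w ⬝ᵥ w) ≤ w ⬝ᵥ (T *ᵥ w) := by
  obtain ⟨ε, hε, rfl⟩ := h
  have hsq : ∀ i, ε i * ε i = 1 := fun i => by rcases hε i with h | h <;> simp [h]
  have hnorm : (ε * w) ⬝ᵥ (ε * w) = w ⬝ᵥ w := by
    simp only [dotProduct, Pi.mul_apply]
    exact sum_congr rfl fun i _ => by linear_combination (w i * w i) * hsq i
  have hform : (ε * w) ⬝ᵥ (S *ᵥ (ε * w)) = w ⬝ᵥ ((diagonal ε * S * diagonal ε) *ᵥ w) := by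
    have hD : ∀ z, diagonal ε *ᵥ z = ε * z := fun z => funext (mulVec_diagonal ε z)
    have hD' : w ᵥ* diagonal ε = ε * w :=
      funext fun i => (vecMul_diagonal w ε i).trans (mul_comm _ _)
    rw [← mulVec_mulVec, ← mulVec_mulVec, dotProduct_mulVec w (diagonal ε), hD', hD]
  rw [← hnorm, ← hform]
  exact hS _

end Switching

section SeidelOf

variable {V : Type*} [Fintype V] {G : SimpleGraph V} {a b : V}

@[simp] theorem seidelOf_apply_self (a : V) : seidelOf G a a = 0 := by simp [seidelOf]

theorem seidelOf_apply_of_adj (h : G.Adj a b) : seidelOf G a b = -1 := by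
  simp [seidelOf, h, h.ne]

theorem seidelOf_apply_of_not_adj (hab : a ≠ b) (h : ¬G.Adj a b) : seidelOf G a b = 1 := by
  simp [seidelOf, h, hab]

end SeidelOf

section SwitchGraph

variable {n : ℕ} {S : Matrix (Fin n) (Fin n) ℝ} {σ : Fin n → ℝ}

/-- The copy in `Sw(S)` of the vertex `a` of the switching of `S` by the signs `σ`. -/
noncomputable def switchLift (σ : Fin n → ℝ) (a : Fin n) : Fin n ⊕ Fin n :=
  if σ a = 1 then .inl a else .inr a

theorem switchLift_injective (σ : Fin n → ℝ) : Function.Injective (switchLift σ) := by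
  intro a b h
  unfold switchLift at h
  split_ifs at h <;> simpa using h

theorem switchGraph_adj_switchLift (hσ : ∀ i, σ i = 1 ∨ σ i = -1) {a b : Fin n} (hab : a ≠ b)
    (h : σ a * S a b * σ b = -1) : (switchGraph S).Adj (switchLift σ a) (switchLift σ b) := by
  refine (SimpleGraph.fromRel_adj _ _ _).mpr ⟨(switchLift_injective σ).ne hab, Or.inl ?_⟩
  rcases hσ a with ha | ha <;> rcases hσ b with hb | hb <;>
    norm_num [switchLift, ha, hb, one_apply_ne hab] at h ⊢ <;> linarith

theorem card_le_cliqueNum_switchGraph (hσ : ∀ i, σ i = 1 ∨ σ i = -1) (K : Finset (Fin n))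
    (hK : ∀ a ∈ K, ∀ b ∈ K, a ≠ b → σ a * S a b * σ b = -1) :
    #K ≤ (switchGraph S).cliqueNum := by
  have hclique : (switchGraph S).IsClique (K.map ⟨_, switchLift_injective σ⟩ : Set _) := by
    simp only [coe_map, Function.Embedding.coeFn_mk]
    rintro _ ⟨a, ha, rfl⟩ _ ⟨b, hb, rfl⟩ hne
    exact switchGraph_adj_switchLift hσ (ne_of_apply_ne _ hne)
      (hK a ha b hb (ne_of_apply_ne _ hne))
  simpa using hclique.card_le_cliqueNum

/-- Switching `G` with respect to `B` turns `K` into a clique. -/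
theorem card_le_cliqueNum_switchGraph_of_swEquiv {G : SimpleGraph (Fin n)}
    (hsw : SwEquiv S (seidelOf G)) (K B : Finset (Fin n))
    (hK : ∀ a ∈ K, ∀ b ∈ K, a ≠ b → (G.Adj a b ↔ (a ∈ B ↔ b ∈ B))) :
    #K ≤ (switchGraph S).cliqueNum := by
  obtain ⟨ε, hε, hT⟩ := hsw.exists_apply_eq
  refine card_le_cliqueNum_switchGraph (σ := fun i => ε i * if i ∈ B then -1 else 1)
    (fun i => by rcases hε i with h | h <;> split_ifs <;> simp [h]) K fun a ha b hb hab => ?_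
  calc (ε a * if a ∈ B then -1 else 1) * S a b * (ε b * if b ∈ B then -1 else 1)
      = (if a ∈ B then -1 else 1) * (if b ∈ B then -1 else 1) * seidelOf G a b := by
        rw [hT]; ring
    _ = -1 := by
      have key := hK a ha b hb hab
      by_cases hadj : G.Adj a b
      · rw [seidelOf_apply_of_adj hadj]; split_ifs <;> simp_all
      · rw [seidelOf_apply_of_not_adj hab hadj]; split_ifs <;> simp_all

end SwitchGraph

section Pillar

variable {V κ : Type*} {G : SimpleGraph V} {x : κ → V}

variable (G x) in
/-- The `(|κ|, 1)`-pillar `Pᵢ` of the clique `x`. -/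
def pillar (i : κ) : Set V :=
  {y | (∀ j, y ≠ x j) ∧ G.Adj y (x i) ∧ ∀ j, j ≠ i → ¬G.Adj y (x j)}

theorem pillar_comp_perm (σ : Equiv.Perm κ) (i : κ) : pillar G (x ∘ σ) i = pillar G x (σ i) := by
  ext y
  refine and_congr (σ.forall_congr_right (q := fun j => y ≠ x j)) (and_congr_right fun _ => ?_)
  rw [← σ.forall_congr_right (q := fun j => j ≠ σ i → ¬G.Adj y (x j))]
  simp

theorem adj_iff_of_mem_pillar {i : κ} {y : V} (hy : y ∈ pillar G x i) (j : κ) :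
    G.Adj y (x j) ↔ j = i := by
  refine ⟨fun h => by_contra fun hj => hy.2.2 j hj h, ?_⟩
  rintro rfl
  exact hy.2.1

theorem eq_of_mem_pillar {i j : κ} {y : V} (hi : y ∈ pillar G x i) (hj : y ∈ pillar G x j) :
    i = j :=
  (adj_iff_of_mem_pillar hj i).mp hi.2.1

theorem injective_of_adj (hx : ∀ i j, i ≠ j → G.Adj (x i) (x j)) : Function.Injective x :=
  fun i j h => by_contra fun hij => (hx i j hij).ne h

theorem isIndepSet_pillar [Fintype κ] [DecidableEq κ] {n : ℕ} {S : Matrix (Fin n) (Fin n) ℝ}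
    {G : SimpleGraph (Fin n)} (hsw : SwEquiv S (seidelOf G))
    (hω : (switchGraph S).cliqueNum ≤ Fintype.card κ) {x : κ → Fin n}
    (hx : ∀ i j, i ≠ j → G.Adj (x i) (x j)) (i : κ) : G.IsIndepSet (pillar G x i) := by
  intro y hy z hz hyz hadj
  set A := (univ.erase i).image x
  have hdisj : Disjoint A {y, z} := by
    simp only [A, disjoint_insert_right, disjoint_singleton_right, mem_image, not_exists, not_and]
    exact ⟨fun j _ h => hy.1 j h.symm, fun j _ h => hz.1 j h.symm⟩
  have hK := card_le_cliqueNum_switchGraph_of_swEquiv hsw (A ∪ {y, z}) {y, z} ?_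
  · rw [card_union_of_disjoint hdisj, card_image_of_injective _ (injective_of_adj hx),
      card_erase_of_mem (mem_univ _), card_pair hyz, card_univ] at hK
    have := Fintype.card_pos_iff.mpr ⟨i⟩
    omega
  · intro a ha b hb hab
    simp only [A, mem_union, mem_image, mem_erase, mem_univ, and_true, mem_insert,
      mem_singleton] at ha hb
    have hyx j : x j ≠ y := (hy.1 j).symm
    have hzx j : x j ≠ z := (hz.1 j).symm
    have hxy j (hj : j ≠ i) : ¬G.Adj (x j) y := fun h => hy.2.2 j hj h.symm
    have hxz j (hj : j ≠ i) : ¬G.Adj (x j) z := fun h => hz.2.2 j hj h.symm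
    have hzy := hadj.symm
    rcases ha with ⟨j, hj, rfl⟩ | rfl | rfl <;> rcases hb with ⟨k, hk, rfl⟩ | rfl | rfl
    · simp [hx j k (ne_of_apply_ne x hab), hyx, hzx]
    all_goals simp_all [G.adj_comm]

end Pillar

section BlockVector

variable {V ι R : Type*} [DecidableEq V] [Fintype ι] [CommRing R]

def blockVec (W : ι → Finset V) (t : ι → R) : V → R := fun p => ∑ a, if p ∈ W a then t a else 0

theorem blockVec_eq_sum (W : ι → Finset V) (t : ι → R) :
    blockVec W t = ∑ a, t a • fun p => if p ∈ W a then 1 else 0 := by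
  ext p; simp [blockVec]

theorem sum_sum_apply_of_offDiag_eq {M : Matrix V V R} {d e : R} (hM : ∀ p, M p p = d)
    {s t : Finset V} (h : ∀ p ∈ s, ∀ q ∈ t, p ≠ q → M p q = e) :
    ∑ p ∈ s, ∑ q ∈ t, M p q = e * (#s * #t - #(s ∩ t)) + d * #(s ∩ t) := by
  have hrow : ∀ p ∈ s, ∑ q ∈ t, M p q = ∑ q ∈ t, (e + if p = q then d - e else 0) := fun p hp =>
    sum_congr rfl fun q hq => by
      by_cases hpq : p = q
      · subst hpq; simp [hM]
      · simp [hpq, h p hp q hq hpq]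
  rw [sum_congr rfl hrow]
  simp only [sum_add_distrib, sum_const, sum_ite_eq, sum_ite_mem, nsmul_eq_mul]
  ring

def quotientForm (E : ι → ι → R) (k : R) (n : ι → ℕ) (t : ι → R) : R :=
  ∑ a, ∑ b, t a * t b * E a b * n a * n b + ∑ a, t a ^ 2 * (k - E a a) * n a

theorem Int.cast_quotientForm (E : ι → ι → ℤ) (k : ℤ) (n : ι → ℕ) (t : ι → ℤ) :
    ((quotientForm E k n t : ℤ) : R) =
      quotientForm (fun a b => (E a b : R)) k n fun a => (t a : R) := by
  simp [quotientForm]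

variable [Fintype V]

theorem indicator_dotProduct_mulVec (M : Matrix V V R) (s t : Finset V) :
    (fun p => if p ∈ s then (1 : R) else 0) ⬝ᵥ (M *ᵥ fun q => if q ∈ t then 1 else 0) =
      ∑ p ∈ s, ∑ q ∈ t, M p q := by
  simp [dotProduct, mulVec]

theorem blockVec_dotProduct_mulVec (M : Matrix V V R) (W : ι → Finset V) (t : ι → R) :
    blockVec W t ⬝ᵥ (M *ᵥ blockVec W t) = ∑ a, ∑ b, t a * t b * ∑ p ∈ W a, ∑ q ∈ W b, M p q := by
  simp only [blockVec_eq_sum, mulVec_sum, dotProduct_sum, sum_dotProduct, mulVec_smul,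
    dotProduct_smul, smul_dotProduct, indicator_dotProduct_mulVec, smul_eq_mul]
  rw [sum_comm]
  simp only [mul_sum, mul_assoc, mul_left_comm]

theorem blockVec_dotProduct_mulVec_add_eq_quotientForm {M : Matrix V V R} (hM : ∀ p, M p p = 0)
    {W : ι → Finset V} (hW : Pairwise fun a b => Disjoint (W a) (W b)) {E : ι → ι → R}
    (hE : ∀ a b, ∀ p ∈ W a, ∀ q ∈ W b, p ≠ q → M p q = E a b) (k : R) (t : ι → R) :
    blockVec W t ⬝ᵥ (M *ᵥ blockVec W t) + k * (blockVec W t ⬝ᵥ blockVec W t) =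
      quotientForm E k (fun a => #(W a)) t := by
  classical
  have hcard : ∀ a b, (#(W a ∩ W b) : R) = if a = b then (#(W a) : R) else 0 := by
    intro a b
    split_ifs with hab
    · rw [hab, inter_self]
    · rw [disjoint_iff_inter_eq_empty.mp (hW hab), card_empty, Nat.cast_zero]
  have hblock : ∀ a b, ∑ p ∈ W a, ∑ q ∈ W b, (M + k • 1) p q =
      E a b * #(W a) * #(W b) + if a = b then (k - E a a) * #(W a) else 0 := by
    intro a b
    rw [sum_sum_apply_of_offDiag_eq (d := k) (e := E a b) (by simp [hM]) fun p hp q hq hpq => by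
      simp [hE a b p hp q hq hpq, one_apply_ne hpq], hcard]
    split_ifs with hab
    · subst hab; ring
    · ring
  have hk : blockVec W t ⬝ᵥ (M *ᵥ blockVec W t) + k * (blockVec W t ⬝ᵥ blockVec W t) =
      blockVec W t ⬝ᵥ ((M + k • 1) *ᵥ blockVec W t) := by
    simp [add_mulVec, smul_mulVec, dotProduct_add, dotProduct_smul]
  rw [hk, blockVec_dotProduct_mulVec]
  simp only [hblock, quotientForm, mul_add, sum_add_distrib, mul_ite, mul_zero, sum_ite_eq,
    mem_univ, if_true]
  congr 1
  · simp only [mul_assoc]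
  · exact sum_congr rfl fun a _ => by ring

end BlockVector

/-- The parts of the configuration: the clique vertices `x i`, the vertices `u ∈ P₁` and
`v ∈ P₂`, and the vertices of `P₀` adjacent to `u` iff `i = 1` and to `v` iff `j = 1`. -/
inductive Cell
  | clique (i : Fin 4)
  | u
  | v
  | pillar (i j : Fin 2)
  deriving DecidableEq, Fintype

namespace Cell

def adj : Cell → Cell → Bool
  | clique i, clique j => i != j
  | clique i, u | u, clique i => i == 1
  | clique i, v | v, clique i => i == 2
  | clique i, pillar _ _ | pillar _ _, clique i => i == 0
  | u, v | v, u => true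
  | u, pillar i _ | pillar i _, u => i == 1
  | v, pillar _ j | pillar _ j, v => j == 1
  | _, _ => false

/-- The diagonal is `1`, not `0`: the pillar cells are independent sets, and for the singleton
cells the diagonal drops out of `quotientForm`. -/
def seidel (a b : Cell) : ℤ := if a.adj b then -1 else 1

end Cell

section Configuration

variable {V : Type*} {G : SimpleGraph V} [DecidableRel G.Adj] {x : Fin 4 → V} {u v : V}
  {W : Fin 2 → Fin 2 → Finset V}

variable (G) in
def nbrType (u v y : V) : Fin 2 × Fin 2 :=
  (if G.Adj y u then 1 else 0, if G.Adj y v then 1 else 0)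

theorem adj_iff_of_nbrType_eq {y : V} {i j : Fin 2} (h : nbrType G u v y = (i, j)) :
    (G.Adj y u ↔ i = 1) ∧ (G.Adj y v ↔ j = 1) := by
  simp only [nbrType, Prod.mk.injEq] at h
  obtain ⟨rfl, rfl⟩ := h
  constructor <;> split_ifs <;> simp_all

variable (x u v W) in
def configBlock : Cell → Finset V
  | .clique i => {x i}
  | .u => {u}
  | .v => {v}
  | .pillar i j => W i j

theorem configBlock_disjoint (hx : ∀ i j, i ≠ j → G.Adj (x i) (x j)) (hu : u ∈ pillar G x 1)
    (hv : v ∈ pillar G x 2) (huv : G.Adj u v)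
    (hW : ∀ i j, ∀ y ∈ W i j, y ∈ pillar G x 0 ∧ nbrType G u v y = (i, j)) :
    Pairwise fun a b => Disjoint (configBlock x u v W a) (configBlock x u v W b) := by
  suffices h : ∀ a b, ∀ p ∈ configBlock x u v W a, p ∈ configBlock x u v W b → a = b from
    fun a b hab => Finset.disjoint_left.mpr fun p hpa hpb => hab (h a b p hpa hpb)
  have hu0 (p : V) (hp : p ∈ pillar G x 0) : p ≠ u := fun h =>
    absurd (eq_of_mem_pillar hp (h ▸ hu)) (by decide)
  have hv0 (p : V) (hp : p ∈ pillar G x 0) : p ≠ v := fun h =>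
    absurd (eq_of_mem_pillar hp (h ▸ hv)) (by decide)
  rintro (i | _ | _ | ⟨i, j⟩) (i' | _ | _ | ⟨i', j'⟩) <;>
    simp only [configBlock, mem_singleton, forall_eq, Cell.clique.injEq, Cell.pillar.injEq,
      reduceCtorEq, imp_false, imp_true_iff]
  · exact fun h => injective_of_adj hx h
  · exact fun h => hu.1 i h.symm
  · exact fun h => hv.1 i h.symm
  · exact fun h => (hW _ _ _ h).1.1 i rfl
  · exact hu.1 i'
  · exact huv.ne
  · exact fun h => hu0 u (hW _ _ _ h).1 rfl
  · exact hv.1 i'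
  · exact huv.ne'
  · exact fun h => hv0 v (hW _ _ _ h).1 rfl
  · exact fun p hp => (hW _ _ p hp).1.1 i'
  · exact fun p hp => hu0 p (hW _ _ p hp).1
  · exact fun p hp => hv0 p (hW _ _ p hp).1
  · exact fun p hp hp' => by simpa using (hW _ _ p hp).2.symm.trans (hW _ _ p hp').2

theorem configBlock_adj_iff (hx : ∀ i j, i ≠ j → G.Adj (x i) (x j)) (hu : u ∈ pillar G x 1)
    (hv : v ∈ pillar G x 2) (huv : G.Adj u v) (hP : G.IsIndepSet (pillar G x 0))
    (hW : ∀ i j, ∀ y ∈ W i j, y ∈ pillar G x 0 ∧ nbrType G u v y = (i, j)) :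
    ∀ a b, ∀ p ∈ configBlock x u v W a, ∀ q ∈ configBlock x u v W b, p ≠ q →
      (G.Adj p q ↔ a.adj b) := by
  rintro (i | _ | _ | ⟨i, j⟩) (i' | _ | _ | ⟨i', j'⟩) <;>
    simp only [configBlock, mem_singleton, forall_eq]
  · exact fun h => by simp [Cell.adj, hx _ _ (ne_of_apply_ne x h), ne_of_apply_ne x h]
  · exact fun _ => by rw [G.adj_comm]; simp [Cell.adj, adj_iff_of_mem_pillar hu]
  · exact fun _ => by rw [G.adj_comm]; simp [Cell.adj, adj_iff_of_mem_pillar hv]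
  · exact fun q hq _ => by rw [G.adj_comm]; simp [Cell.adj, adj_iff_of_mem_pillar (hW _ _ q hq).1]
  · exact fun _ => by simp [Cell.adj, adj_iff_of_mem_pillar hu]
  · exact fun h => absurd rfl h
  · exact fun _ => by simp [Cell.adj, huv]
  · exact fun q hq _ => by rw [G.adj_comm]; simp [Cell.adj, adj_iff_of_nbrType_eq (hW _ _ q hq).2]
  · exact fun _ => by simp [Cell.adj, adj_iff_of_mem_pillar hv]
  · exact fun _ => by simp [Cell.adj, huv.symm]
  · exact fun h => absurd rfl h
  · exact fun q hq _ => by rw [G.adj_comm]; simp [Cell.adj, adj_iff_of_nbrType_eq (hW _ _ q hq).2]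
  · exact fun p hp _ => by simp [Cell.adj, adj_iff_of_mem_pillar (hW _ _ p hp).1]
  · exact fun p hp _ => by simp [Cell.adj, adj_iff_of_nbrType_eq (hW _ _ p hp).2]
  · exact fun p hp _ => by simp [Cell.adj, adj_iff_of_nbrType_eq (hW _ _ p hp).2]
  · exact fun p hp q hq hpq => by simp [Cell.adj, hP (hW _ _ p hp).1 (hW _ _ q hq).1 hpq]

end Configuration

/-- A test vector for the configuration: it takes `size i j` vertices of the pillar class
`Cell.pillar i j` and has the value `coeff a` on the cell `a`. -/
structure Certificate where
  size : Fin 2 → Fin 2 → ℕ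
  coeffClique : Fin 4 → ℤ
  coeffU : ℤ
  coeffV : ℤ
  coeffPillar : Fin 2 → Fin 2 → ℤ

namespace Certificate

def cellSize (C : Certificate) : Cell → ℕ
  | .pillar i j => C.size i j
  | _ => 1

def coeff (C : Certificate) : Cell → ℤ
  | .clique i => C.coeffClique i
  | .u => C.coeffU
  | .v => C.coeffV
  | .pillar i j => C.coeffPillar i j

end Certificate

/-- Rounded eigenvectors for the least eigenvalue of the matrix of `quotientForm Cell.seidel 5`.
Every split of `20` into four class sizes dominates the sizes of one of them (eleven would not
suffice). -/
def certificates : List Certificate :=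
  [⟨!![13, 0; 0, 0], ![-2, 3, 3, 2], 3, 3, !![-1, 0; 0, 0]⟩,
   ⟨!![0, 9; 0, 0], ![2, 8, 6, 8], 1, -6, !![0, -2; 0, 0]⟩,
   ⟨!![0, 0; 9, 0], ![2, 6, 8, 8], -6, 1, !![0, 0; -2, 0]⟩,
   ⟨!![0, 0; 0, 4], ![1, 2, 2, 2], -2, -2, !![0, 0; 0, -1]⟩,
   ⟨!![0, 5; 6, 0], ![0, 1, -2, -1], 4, -4, !![0, -2; 2, 0]⟩,
   ⟨!![0, 7; 4, 0], ![0, 3, 1, 2], 3, -4, !![0, -2; 2, 0]⟩,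
   ⟨!![4, 3; 7, 0], ![4, 6, 13, 11], -16, 5, !![2, 4; -6, 0]⟩,
   ⟨!![5, 0; 0, 2], ![2, 1, 1, 2], -3, -3, !![1, 0; 0, -2]⟩,
   ⟨!![8, 0; 1, 1], ![-4, 2, 2, 0], 6, 6, !![-2, 0; 1, 4]⟩,
   ⟨!![9, 6; 0, 0], ![-4, -1, 0, -2], 4, 8, !![-2, 2; 0, 0]⟩,
   ⟨!![10, 0; 5, 0], ![-4, 2, 1, 0], 8, 4, !![-2, 0; 2, 0]⟩,
   ⟨!![11, 0; 3, 0], ![-12, 12, 11, 6], 20, 16, !![-6, 0; 4, 0]⟩]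

theorem certificates_quotientForm_neg :
    ∀ C ∈ certificates, quotientForm Cell.seidel 5 C.cellSize C.coeff < 0 := by
  decide

theorem exists_certificate_le (m : Fin 2 → Fin 2 → ℕ) (hm : ∑ i, ∑ j, m i j = 20) :
    ∃ C ∈ certificates, ∀ i j, C.size i j ≤ m i j := by
  have hcover : ∀ a ≤ 20, ∀ b ≤ 20 - a, ∀ c ≤ 20 - a - b, ∃ C ∈ certificates,
      C.size 0 0 ≤ a ∧ C.size 0 1 ≤ b ∧ C.size 1 0 ≤ c ∧ C.size 1 1 ≤ 20 - a - b - c := by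
    decide
  simp only [Fin.sum_univ_two] at hm
  obtain ⟨C, hC, hle⟩ := hcover (m 0 0) (by omega) (m 0 1) (by omega) (m 1 0) (by omega)
  refine ⟨C, hC, fun i j => ?_⟩
  fin_cases i <;> fin_cases j <;> simp <;> omega

theorem ncard_pillar_zero_le {V : Type*} [Fintype V] [DecidableEq V] {G : SimpleGraph V}
    (hG : ∀ w : V → ℝ, -5 * (w ⬝ᵥ w) ≤ w ⬝ᵥ (seidelOf G *ᵥ w))
    {x : Fin 4 → V} (hx : ∀ i j, i ≠ j → G.Adj (x i) (x j)) (hP : G.IsIndepSet (pillar G x 0))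
    {u v : V} (hu : u ∈ pillar G x 1) (hv : v ∈ pillar G x 2) (huv : G.Adj u v) :
    (pillar G x 0).ncard ≤ 19 := by
  classical
  by_contra! h
  obtain ⟨Q, hQP, hQ⟩ : ∃ Q ⊆ (pillar G x 0).toFinset, #Q = 20 :=
    exists_subset_card_eq (by rw [← Set.ncard_eq_toFinset_card']; omega)
  obtain ⟨C, hC, hCQ⟩ := exists_certificate_le (fun i j => #{y ∈ Q | nbrType G u v y = (i, j)}) (by
    rw [← hQ, card_eq_sum_card_fiberwise (f := nbrType G u v) (t := univ) (by simp),
      Fintype.sum_prod_type])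
  choose W hWQ hWcard using fun i j => exists_subset_card_eq (hCQ i j)
  have hW : ∀ i j, ∀ y ∈ W i j, y ∈ pillar G x 0 ∧ nbrType G u v y = (i, j) := fun i j y hy => by
    obtain ⟨hyQ, hy⟩ := mem_filter.mp (hWQ i j hy)
    exact ⟨Set.mem_toFinset.mp (hQP hyQ), hy⟩
  have hB : ∀ a b, ∀ p ∈ configBlock x u v W a, ∀ q ∈ configBlock x u v W b, p ≠ q →
      seidelOf G p q = (a.seidel b : ℝ) := by
    intro a b p hp q hq hpq
    have := configBlock_adj_iff hx hu hv huv hP hW a b p hp q hq hpq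
    by_cases hadj : G.Adj p q
    · simp [Cell.seidel, seidelOf_apply_of_adj hadj, this.mp hadj]
    · simp [Cell.seidel, seidelOf_apply_of_not_adj hpq hadj, this.not.mp hadj]
  have hcard : (fun a => #(configBlock x u v W a)) = C.cellSize := by
    funext a; cases a <;> simp [configBlock, Certificate.cellSize, hWcard]
  have hform := blockVec_dotProduct_mulVec_add_eq_quotientForm (fun p => seidelOf_apply_self p)
    (configBlock_disjoint hx hu hv huv hW) hB 5 fun a => (C.coeff a : ℝ)
  have hneg : ((quotientForm Cell.seidel 5 C.cellSize C.coeff : ℤ) : ℝ) < 0 := by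
    exact_mod_cast certificates_quotientForm_neg C hC
  rw [hcard] at hform
  rw [Int.cast_quotientForm] at hneg
  push_cast at hneg
  linarith [hG (blockVec (configBlock x u v W) fun a => (C.coeff a : ℝ))]

/-- Let `S` be a Seidel matrix with smallest eigenvalue exactly `-5` and
`ω([S]) = 4`, let `G` be a graph in the switching class of `S` containing a 4-clique
`x 0, x 1, x 2, x 3`, and let `P i` be the corresponding `(4,1)`-pillars. If some vertex of
`P 1` is adjacent to some vertex of `P 2`, then `|P 0| ≤ 19` and `|P 3| ≤ 19`. -/
theorem stmt_16 {n : ℕ} (S : Matrix (Fin n) (Fin n) ℝ) (hS : IsSeidel S)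
    (hmin : minEig S = -5)
    (hω : (switchGraph S).cliqueNum = 4)
    (G : SimpleGraph (Fin n)) (hsw : SwEquiv S (seidelOf G))
    (x : Fin 4 → Fin n) (hclique : ∀ i j, i ≠ j → G.Adj (x i) (x j))
    (P : Fin 4 → Set (Fin n))
    (hP : ∀ i, P i =
      {y | (∀ j, y ≠ x j) ∧ G.Adj y (x i) ∧ ∀ j, j ≠ i → ¬ G.Adj y (x j)})
    (u v : Fin n) (hu : u ∈ P 1) (hv : v ∈ P 2) (huv : G.Adj u v) :
    (P 0).ncard ≤ 19 ∧ (P 3).ncard ≤ 19 := by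
  obtain rfl : P = pillar G x := funext hP
  have hG : ∀ w, -5 * (w ⬝ᵥ w) ≤ w ⬝ᵥ (seidelOf G *ᵥ w) :=
    hsw.le_dotProduct_mulVec fun w => hmin ▸
      (isHermitian_iff_isSymm.mpr hS.1).minEig_mul_dotProduct_le w
  have hind := isIndepSet_pillar hsw (by simp [hω]) hclique
  refine ⟨ncard_pillar_zero_le hG hclique (hind 0) hu hv huv, ?_⟩
  let σ := Equiv.swap (0 : Fin 4) 3
  have hσ : ∀ i, pillar G (x ∘ σ) i = pillar G x (σ i) := pillar_comp_perm σ
  have h := ncard_pillar_zero_le hG (x := x ∘ σ) (fun i j hij => hclique _ _ (σ.injective.ne hij))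
    (by rw [hσ]; exact hind (σ 0)) (by rw [hσ]; exact hu) (by rw [hσ]; exact hv) huv
  rwa [hσ] at h
end
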